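/- Let G be a τ₂-group with Malcev basis (A;C) = (a_1,…,a_n; c_1,…,c_m), with Malcev coordinates α_i, γ_t and structure constants λ_{t,i,j}. Fix k ∈ {1,…,n} and suppose the matrix M_k has rank n−1 (equivalently, the only v ∈ ℤ^{n−1} with M_k·v = 0 is v = 0). Then for every x ∈ G, [a_k, x] = 1 if and only if x = a_k^{α_k(x)}·c_1^{γ_1(x)}⋯c_m^{γ_m(x)} (i.e., α_j(x) = 0 for all j ≠ k). If, in addition, λ_{t,k,j} ≠ 0 for some t and some j ≠ k, then Z(G) = ⟨C⟩ and a_k is c-small. -/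

import Mathlib

open scoped commutatorElement

/-!
Commutators are central, so `x ↦ ⁅a_k, x⁆` is a homomorphism and, in Malcev coordinates,
`⁅a_k, x⁆ = ∏_t c_t ^ (∑_j λ_{t,k,j} α_j(x))`. The `c_t` are independent, so `x` commutes with
`a_k` iff `(α_j(x))_{j ≠ k}` lies in the kernel of `M_k`, which is trivial. A central `z` thus
has `α_j(z) = 0` for `j ≠ k`, and commuting with an `a_j` for which `λ_{t,k,j} ≠ 0` forces
`α_k(z) = 0` as well, so `z ∈ ⟨C⟩`.
-/

/-- Old Mathlib definition (removed since): a monoid is torsion-free if no non-identity element has finite order. -/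
def Monoid.IsTorsionFree (G : Type*) [Monoid G] : Prop :=
  ∀ g : G, g ≠ 1 → ¬IsOfFinOrder g

noncomputable def grpRank (G : Type*) [Group G] : ℕ :=
  sInf {k : ℕ | ∃ S : Finset G, S.card = k ∧ Subgroup.closure (S : Set G) = ⊤}

def IsTau2 (G : Type*) [Group G] : Prop :=
  Group.FG G ∧ Monoid.IsTorsionFree G ∧ ∀ g h : G, ⁅g, h⁆ ∈ Subgroup.center G

def prodPow {G : Type*} [Group G] {k : ℕ} (v : Fin k → G) (e : Fin k → ℤ) : G :=
  (List.ofFn fun i => v i ^ e i).prod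

def tau2Rels (n m : ℕ) (lam : Fin m → Fin n → Fin n → ℤ) :
    Set (FreeGroup (Fin n ⊕ Fin m)) :=
  {r | (∃ i j : Fin n, i < j ∧
          r = ⁅(FreeGroup.of (Sum.inl i) : FreeGroup (Fin n ⊕ Fin m)),
              FreeGroup.of (Sum.inl j)⁆ *
              (prodPow (fun t : Fin m => FreeGroup.of (Sum.inr t)) (fun t => lam t i j))⁻¹) ∨
       (∃ (i : Fin n) (t : Fin m), r = ⁅(FreeGroup.of (Sum.inl i) : FreeGroup (Fin n ⊕ Fin m)),
              FreeGroup.of (Sum.inr t)⁆) ∨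
       (∃ t s : Fin m, r = ⁅(FreeGroup.of (Sum.inr t) : FreeGroup (Fin n ⊕ Fin m)),
              FreeGroup.of (Sum.inr s)⁆)}

def Tau2Group (n m : ℕ) (lam : Fin m → Fin n → Fin n → ℤ) : Type :=
  PresentedGroup (tau2Rels n m lam)

instance (n m : ℕ) (lam : Fin m → Fin n → Fin n → ℤ) : Group (Tau2Group n m lam) :=
  inferInstanceAs (Group (PresentedGroup (tau2Rels n m lam)))

def tau2a {n m : ℕ} {lam : Fin m → Fin n → Fin n → ℤ} (i : Fin n) : Tau2Group n m lam :=
  PresentedGroup.of (Sum.inl i)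

def tau2c {n m : ℕ} {lam : Fin m → Fin n → Fin n → ℤ} (t : Fin m) : Tau2Group n m lam :=
  PresentedGroup.of (Sum.inr t)

def IsCSmall {G : Type*} [Group G] (g : G) : Prop :=
  ∀ x : G, x ∈ Subgroup.centralizer {g} ↔
    ∃ (t : ℤ) (z : G), z ∈ Subgroup.center G ∧ x = g ^ t * z

def IsMalcevBasis {G : Type*} [Group G] {n m : ℕ} (a : Fin n → G) (c : Fin m → G) : Prop :=
  (∀ t, c t ∈ Subgroup.center G) ∧
  (commutator G ≤ Subgroup.closure (Set.range c)) ∧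
  (∀ g : G, ∃! p : (Fin n → ℤ) × (Fin m → ℤ), g = prodPow a p.1 * prodPow c p.2)

section prodPow

variable {G H : Type*} [Group G] [Group H] {k : ℕ}

theorem map_prodPow (f : G →* H) (v : Fin k → G) (e : Fin k → ℤ) :
    f (prodPow v e) = prodPow (fun i => f (v i)) e := by
  simp only [prodPow, map_list_prod, List.map_ofFn, Function.comp_def, map_zpow]

theorem prodPow_zero (v : Fin k → G) : prodPow v 0 = 1 :=
  List.prod_eq_one (by simp)

theorem prodPow_mem {S : Subgroup G} {v : Fin k → G} (hv : ∀ i, v i ∈ S) (e : Fin k → ℤ) :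
    prodPow v e ∈ S :=
  S.list_prod_mem (by simpa using fun i => S.zpow_mem (hv i) (e i))

theorem Subgroup.coe_prodPow {S : Subgroup G} (v : Fin k → S) (e : Fin k → ℤ) :
    ((prodPow v e : S) : G) = prodPow (fun i => (v i : G)) e :=
  map_prodPow S.subtype v e

theorem List.prod_ofFn_eq_of_eq_one {M : Type*} [Monoid M] {N : ℕ} (f : Fin N → M) (j : Fin N)
    (hf : ∀ i ≠ j, f i = 1) : (List.ofFn f).prod = f j := by
  induction N with
  | zero => exact j.elim0
  | succ N ih =>
    rw [List.ofFn_succ, List.prod_cons]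
    cases j using Fin.cases with
    | zero =>
      rw [List.prod_eq_one (by simpa using fun i => hf i.succ (Fin.succ_ne_zero i)), mul_one]
    | succ j =>
      rw [hf 0 (Fin.succ_ne_zero j).symm, one_mul]
      exact ih _ j fun i hi => hf i.succ (Fin.succ_injective _ |>.ne hi)

theorem prodPow_single (v : Fin k → G) (j : Fin k) (s : ℤ) :
    prodPow v (Pi.single j s) = v j ^ s := by
  rw [prodPow, List.prod_ofFn_eq_of_eq_one _ j fun i hi => by simp [hi], Pi.single_eq_same]

end prodPow

section CommGroup

variable {A : Type*} [CommGroup A] {k l : ℕ}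

theorem Finset.prod_zpow_eq_zpow_sum {ι : Type*} (s : Finset ι) (f : ι → ℤ) (a : A) :
    ∏ i ∈ s, a ^ f i = a ^ ∑ i ∈ s, f i := by
  classical
  induction s using Finset.induction_on with
  | empty => simp
  | insert j s hj ih => rw [Finset.prod_insert hj, Finset.sum_insert hj, ih, zpow_add]

theorem prodPow_eq_prod (v : Fin k → A) (e : Fin k → ℤ) : prodPow v e = ∏ i, v i ^ e i :=
  List.prod_ofFn

theorem prodPow_neg (v : Fin k → A) (e : Fin k → ℤ) : prodPow v (-e) = (prodPow v e)⁻¹ := by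
  simp [prodPow_eq_prod, Finset.prod_inv_distrib]

theorem prodPow_prodPow (v : Fin k → A) (w : Fin l → Fin k → ℤ) (e : Fin l → ℤ) :
    prodPow (fun j => prodPow v (w j)) e = prodPow v fun i => ∑ j, w j i * e j := by
  simp only [prodPow_eq_prod, ← Finset.prod_zpow, ← zpow_mul, ← Finset.prod_zpow_eq_zpow_sum]
  exact Finset.prod_comm

end CommGroup

section Central

open scoped IsMulCommutative

variable {G : Type*} [Group G] {k l : ℕ} {v : Fin k → G}

theorem prodPow_neg_of_mem_center (hv : ∀ i, v i ∈ Subgroup.center G) (e : Fin k → ℤ) :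
    prodPow v (-e) = (prodPow v e)⁻¹ := by
  lift v to Fin k → Subgroup.center G using hv
  rw [← Subgroup.coe_prodPow, ← Subgroup.coe_prodPow, ← Subgroup.coe_inv]
  exact congrArg Subtype.val (prodPow_neg v e)

theorem prodPow_prodPow_of_mem_center (hv : ∀ i, v i ∈ Subgroup.center G)
    (w : Fin l → Fin k → ℤ) (e : Fin l → ℤ) :
    prodPow (fun j => prodPow v (w j)) e = prodPow v fun i => ∑ j, w j i * e j := by
  lift v to Fin k → Subgroup.center G using hv
  simp only [← Subgroup.coe_prodPow]
  exact congrArg Subtype.val (prodPow_prodPow v w e)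

def commutatorElementRightHom (hG : ∀ x y : G, ⁅x, y⁆ ∈ Subgroup.center G) (g : G) : G →* G where
  toFun x := ⁅g, x⁆
  map_one' := commutatorElement_one_right g
  map_mul' x y := by
    rw [commutatorElement_mul_right_eq_mul_conj, mul_assoc _ x,
      Subgroup.mem_center_iff.mp (hG g y) x]
    group

end Central

theorem commute_zpow_mul_of_mem_center {G : Type*} [Group G] (g : G) {z : G}
    (hz : z ∈ Subgroup.center G) (t : ℤ) : Commute g (g ^ t * z) :=
  (Commute.zpow_right rfl t).mul_right (Subgroup.mem_center_iff.mp hz g)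

theorem isCSmall_iff {G : Type*} [Group G] {g : G} :
    IsCSmall g ↔
      ∀ x : G, Commute g x → ∃ (t : ℤ) (z : G), z ∈ Subgroup.center G ∧ x = g ^ t * z := by
  refine forall_congr' fun x => ?_
  rw [Subgroup.mem_centralizer_singleton_iff, ← commute_iff_eq, Commute.symm_iff]
  refine ⟨fun h => h.mp, fun h => ⟨h, ?_⟩⟩
  rintro ⟨t, z, hz, rfl⟩
  exact commute_zpow_mul_of_mem_center g hz t

theorem eq_single_of_forall_sum_mul_eq_zero {R ι κ : Type*} [Ring R] [Fintype ι] [DecidableEq ι]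
    {L : κ → ι → R} {k : ι} (hLk : ∀ t, L t k = 0)
    (hker : ∀ v : ι → R, v k = 0 → (∀ t, ∑ j, L t j * v j = 0) → v = 0)
    {w : ι → R} (hw : ∀ t, ∑ j, L t j * w j = 0) : w = Pi.single k (w k) := by
  have hupdate : Function.update w k 0 = 0 := by
    refine hker _ (by simp) fun t => ?_
    rw [← hw t]
    refine Finset.sum_congr rfl fun j _ => ?_
    rcases eq_or_ne j k with rfl | hj
    · simp [hLk]
    · simp [hj]
  funext j
  rcases eq_or_ne j k with rfl | hj
  · simp
  · simpa [hj] using congrFun hupdate j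

namespace IsMalcevBasis

variable {G : Type*} [Group G] {n m : ℕ} {a : Fin n → G} {c : Fin m → G}

theorem closure_range_le_center (hB : IsMalcevBasis a c) :
    Subgroup.closure (Set.range c) ≤ Subgroup.center G :=
  (Subgroup.closure_le _).mpr (Set.range_subset_iff.mpr hB.1)

theorem commutatorElement_mem_center (hB : IsMalcevBasis a c) (g h : G) :
    ⁅g, h⁆ ∈ Subgroup.center G :=
  hB.closure_range_le_center <| hB.2.1 <|
    Subgroup.commutator_mem_commutator (Subgroup.mem_top g) (Subgroup.mem_top h)

theorem prodPow_injective (hB : IsMalcevBasis a c) : Function.Injective (prodPow c) := by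
  intro e f hef
  obtain ⟨p, -, hp⟩ := hB.2.2 (prodPow a 0 * prodPow c e)
  exact congrArg Prod.snd ((hp (0, e) rfl).trans (hp (0, f) (by rw [hef])).symm)

theorem commutatorElement_eq_prodPow_of_skew {lam : Fin m → Fin n → Fin n → ℤ}
    (hB : IsMalcevBasis a c) (hlam : ∀ i j, i < j → ⁅a i, a j⁆ = prodPow c fun t => lam t i j)
    (hskew : ∀ t i j, lam t j i = -lam t i j) (i j : Fin n) :
    ⁅a i, a j⁆ = prodPow c fun t => lam t i j := by
  rcases lt_trichotomy i j with hij | rfl | hij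
  · exact hlam i j hij
  · have hdiag : (fun t => lam t i i) = 0 := funext fun t => by
      have := hskew t i i
      rw [Pi.zero_apply]; omega
    rw [commutatorElement_self, hdiag, prodPow_zero]
  · rw [← commutatorElement_inv, hlam j i hij, ← prodPow_neg_of_mem_center hB.1]
    exact congrArg _ (funext fun t => by rw [Pi.neg_apply, hskew t i j, neg_neg])

section Coordinates

variable (hB : IsMalcevBasis a c) {α : G → Fin n → ℤ} {γ : G → Fin m → ℤ}
  (hcoord : ∀ g, g = prodPow a (α g) * prodPow c (γ g))
include hB hcoord

theorem commutatorElement_eq_prodPow {lam : Fin m → Fin n → Fin n → ℤ}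
    (hlam : ∀ i j, ⁅a i, a j⁆ = prodPow c fun t => lam t i j) (i : Fin n) (x : G) :
    ⁅a i, x⁆ = prodPow c fun t => ∑ j, lam t i j * α x j := by
  let φ := commutatorElementRightHom hB.commutatorElement_mem_center (a i)
  have hγ : φ (prodPow c (γ x)) = 1 := commutatorElement_eq_one_iff_commute.mpr
    (Subgroup.mem_center_iff.mp (prodPow_mem hB.1 (γ x)) (a i))
  calc ⁅a i, x⁆ = φ (prodPow a (α x)) * φ (prodPow c (γ x)) := by
        rw [← map_mul, ← hcoord]; rfl
    _ = prodPow (fun j => prodPow c fun t => lam t i j) (α x) := by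
      rw [hγ, mul_one, map_prodPow]; exact congrArg₂ _ (funext (hlam i)) rfl
    _ = _ := prodPow_prodPow_of_mem_center hB.1 _ _

theorem commutatorElement_eq_one_iff {lam : Fin m → Fin n → Fin n → ℤ}
    (hlam : ∀ i j, ⁅a i, a j⁆ = prodPow c fun t => lam t i j) (i : Fin n) (x : G) :
    ⁅a i, x⁆ = 1 ↔ ∀ t, ∑ j, lam t i j * α x j = 0 := by
  rw [hB.commutatorElement_eq_prodPow hcoord hlam, ← prodPow_zero c, hB.prodPow_injective.eq_iff,
    funext_iff]
  rfl

theorem center_eq_closure_range (h : ∀ z ∈ Subgroup.center G, α z = 0) :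
    Subgroup.center G = Subgroup.closure (Set.range c) := by
  refine le_antisymm (fun z hz => ?_) hB.closure_range_le_center
  rw [hcoord z, h z hz, prodPow_zero, one_mul]
  exact prodPow_mem (fun t => Subgroup.subset_closure (Set.mem_range_self t)) _

end Coordinates

end IsMalcevBasis

theorem stmt7_general (G : Type) [Group G] (n m : ℕ) (a : Fin n → G) (c : Fin m → G)
    (hMB : IsMalcevBasis a c)
    (α : G → Fin n → ℤ) (γ : G → Fin m → ℤ)
    (hcoord : ∀ g : G, g = prodPow a (α g) * prodPow c (γ g))
    (lam : Fin m → Fin n → Fin n → ℤ)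
    (hlam : ∀ i j : Fin n, i < j → ⁅a i, a j⁆ = prodPow c (fun t => lam t i j))
    (hskew : ∀ (t : Fin m) (i j : Fin n), lam t j i = -lam t i j)
    (k : Fin n)
    (hrank : ∀ v : Fin n → ℤ, v k = 0 → (∀ t : Fin m, ∑ j : Fin n, lam t k j * v j = 0) →
      v = 0) :
    (∀ x : G, ⁅a k, x⁆ = 1 ↔ x = a k ^ α x k * prodPow c (γ x)) ∧
    ((∃ (t : Fin m) (j : Fin n), j ≠ k ∧ lam t k j ≠ 0) →
      Subgroup.center G = Subgroup.closure (Set.range c) ∧ IsCSmall (a k)) := by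
  have hcomm := hMB.commutatorElement_eq_one_iff hcoord
    (hMB.commutatorElement_eq_prodPow_of_skew hlam hskew)
  have hα : ∀ x, ⁅a k, x⁆ = 1 → α x = Pi.single k (α x k) := fun x hx =>
    eq_single_of_forall_sum_mul_eq_zero (L := fun t j => lam t k j)
      (fun t => by have := hskew t k k; omega) hrank ((hcomm k x).mp hx)
  have hcentralizer : ∀ x, ⁅a k, x⁆ = 1 ↔ x = a k ^ α x k * prodPow c (γ x) := by
    refine fun x => ⟨fun hx => ?_, fun hx => ?_⟩
    · rw [← prodPow_single, ← hα x hx]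
      exact hcoord x
    · rw [commutatorElement_eq_one_iff_commute, hx]
      exact commute_zpow_mul_of_mem_center _ (prodPow_mem hMB.1 _) _
  refine ⟨hcentralizer, fun ⟨t, j, _, hlam_kj⟩ => ⟨?_, ?_⟩⟩
  · refine hMB.center_eq_closure_range hcoord fun z hz => ?_
    have hz_comm : ∀ i, ⁅a i, z⁆ = 1 := fun i =>
      commutatorElement_eq_one_iff_commute.mpr (Subgroup.mem_center_iff.mp hz (a i))
    have hαz := hα z (hz_comm k)
    have hjz := (hcomm j z).mp (hz_comm j) t
    rw [hαz, Fintype.sum_eq_single k fun i hi => by simp [hi], Pi.single_eq_same] at hjz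
    have hαzk : α z k = 0 :=
      (mul_eq_zero.mp hjz).resolve_left (by rw [hskew]; exact neg_ne_zero.mpr hlam_kj)
    rw [hαz, hαzk, Pi.single_zero]
  · exact isCSmall_iff.mpr fun x hx => ⟨α x k, prodPow c (γ x), prodPow_mem hMB.1 _,
      (hcentralizer x).mp (commutatorElement_eq_one_iff_commute.mpr hx)⟩

/-- In a τ₂-group G with Malcev basis (a;c), Malcev coordinates α, γ and
structure constants λ, fix k and suppose the matrix M_k has rank n−1, i.e. the only
integer vector v with v_k = 0 and ∑ⱼ λ_{t,k,j}·vⱼ = 0 for all t is v = 0. Then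
[a_k, x] = 1 iff x = a_k^{α_k(x)}·c₁^{γ₁(x)}⋯cₘ^{γₘ(x)}; and if moreover λ_{t,k,j} ≠ 0
for some t and some j ≠ k, then Z(G) = ⟨C⟩ and a_k is c-small. -/
theorem stmt7 (G : Type) [Group G] (n m : ℕ) (a : Fin n → G) (c : Fin m → G)
    (hT : IsTau2 G) (hMB : IsMalcevBasis a c)
    (α : G → Fin n → ℤ) (γ : G → Fin m → ℤ)
    (hcoord : ∀ g : G, g = prodPow a (α g) * prodPow c (γ g))
    (lam : Fin m → Fin n → Fin n → ℤ)
    (hlam : ∀ i j : Fin n, i < j → ⁅a i, a j⁆ = prodPow c (fun t => lam t i j))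
    (hskew : ∀ (t : Fin m) (i j : Fin n), lam t j i = -lam t i j)
    (hdiag : ∀ (t : Fin m) (i : Fin n), lam t i i = 0)
    (k : Fin n)
    (hrank : ∀ v : Fin n → ℤ, v k = 0 → (∀ t : Fin m, ∑ j : Fin n, lam t k j * v j = 0) →
      v = 0) :
    (∀ x : G, ⁅a k, x⁆ = 1 ↔ x = a k ^ α x k * prodPow c (γ x)) ∧
    ((∃ (t : Fin m) (j : Fin n), j ≠ k ∧ lam t k j ≠ 0) →
      Subgroup.center G = Subgroup.closure (Set.range c) ∧ IsCSmall (a k)) :=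
  stmt7_general G n m a c hMB α γ hcoord lam hlam hskew k hrank
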